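/- For every nonnegative integer n, the sum over all words w of length n over {a,b} of m(bwa) equals α·x·y·(αx+βy)^n, and the sum of m(bwb) equals β·y²·(αx+βy)^n. -/

import Mathlib

/-- Number of occurrences of the consecutive pair `cd` in the word `u`
(over the alphabet `{a,b}` encoded as `a = true`, `b = false`). -/
def pairCount (c d : Bool) (u : List Bool) : ℕ :=
  (u.zip u.tail).count (c, d)

/-- The monomial `m(u) = x^{|u|_a} y^{|u|_b} α^{|u|_{aa}+|u|_{ba}} β^{|u|_{ab}+|u|_{bb}}`. -/
def mWord {R : Type*} [CommRing R] (x y α β : R) (u : List Bool) : R :=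
  x ^ u.count true * y ^ u.count false *
    α ^ (pairCount true true u + pairCount false true u) *
    β ^ (pairCount true false u + pairCount false false u)

/-! Every letter of `u` after the first closes exactly one pair, and the second letter of that
pair alone decides whether it contributes `α` or `β`. So `m(c u)` is the weight of `c` times a
product of independent letter weights `αx` (for `a`) and `βy` (for `b`), and summing over the
free middle letters turns that product into `(αx + βy)^n`. -/

section LetterWeight

variable {R : Type*} [CommRing R] (x y α β : R)

def letterWeight (b : Bool) : R :=
  cond b (α * x) (β * y)

lemma mWord_singleton (c : Bool) : mWord x y α β [c] = cond c x y := by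
  cases c <;> simp [mWord, pairCount]

lemma mWord_cons_cons (c b : Bool) (u : List Bool) :
    mWord x y α β (c :: b :: u) = cond c x y * cond b α β * mWord x y α β (b :: u) := by
  cases c <;> cases b <;> simp [mWord, pairCount, pow_succ] <;> ring

lemma mWord_cons (c : Bool) (u : List Bool) :
    mWord x y α β (c :: u) = cond c x y * (u.map (letterWeight x y α β)).prod := by
  induction u generalizing c with
  | nil => simp [mWord_singleton]
  | cons b u ih =>
    rw [mWord_cons_cons, ih, List.map_cons, List.prod_cons]
    cases b <;> simp only [letterWeight, cond_true, cond_false] <;> ring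

lemma sum_mWord_cons_ofFn_append (c t : Bool) (n : ℕ) :
    ∑ w : Fin n → Bool, mWord x y α β (c :: (List.ofFn w ++ [t])) =
      cond c x y * (α * x + β * y) ^ n * letterWeight x y α β t := by
  have sum_letterWeight : ∑ b, letterWeight x y α β b = α * x + β * y := by
    simp [letterWeight]
  simp only [mWord_cons, List.map_append, List.prod_append, List.map_ofFn, List.prod_ofFn,
    List.map_singleton, List.prod_singleton, Function.comp_apply]
  rw [← Finset.mul_sum, ← Finset.sum_mul, ← Fintype.sum_pow, sum_letterWeight, mul_assoc]

end LetterWeight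

/-- Sum over all words `w` of length `n` over `{a,b}` of `m(bwa)` equals
`α x y (αx + βy)^n`, and the sum of `m(bwb)` equals `β y² (αx + βy)^n`. -/
theorem sum_m_bwa_and_bwb {R : Type*} [CommRing R] (x y α β : R) (n : ℕ) :
    (∑ w : Fin n → Bool,
        mWord x y α β (false :: (List.ofFn w ++ [true])) =
      α * x * y * (α * x + β * y) ^ n) ∧
    (∑ w : Fin n → Bool,
        mWord x y α β (false :: (List.ofFn w ++ [false])) =
      β * y ^ 2 * (α * x + β * y) ^ n) := by
  simp only [sum_mWord_cons_ofFn_append, letterWeight, cond_true, cond_false]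
  constructor <;> ring
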